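/- The number b(n,k) of boolean intervals of rank k in the middle order P_n satisfies the recursion b(n,k) = n·b(n−1,k) + (n−1)·b(n−1,k−1). -/

import Mathlib

/-- The inversion sequence of a permutation `w` of `Fin n` (0-indexed values):
`invSeq w i` counts the values `j < i` appearing after `i` in one-line notation. -/
def invSeq {n : ℕ} (w : Equiv.Perm (Fin n)) (i : Fin n) : ℕ :=
  (Finset.univ.filter (fun j : Fin n => j < i ∧ w.symm i < w.symm j)).card

/-- The middle order on permutations: coordinate-wise comparison of inversion sequences. -/
def midLe {n : ℕ} (v w : Equiv.Perm (Fin n)) : Prop :=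
  ∀ i, invSeq v i ≤ invSeq w i

/-- `b n k`: number of boolean intervals of rank `k` in the middle order `P_n`
(with `b n k = 0` for `k < 0`). -/
noncomputable def b (n : ℕ) (k : ℤ) : ℕ :=
  Nat.card {p : Equiv.Perm (Fin n) × Equiv.Perm (Fin n) //
    midLe p.1 p.2 ∧ (∀ i, invSeq p.2 i ≤ invSeq p.1 i + 1) ∧
    ((Finset.univ.filter (fun i : Fin n => invSeq p.2 i = invSeq p.1 i + 1)).card : ℤ) = k}

open Finset Equiv

namespace BooleanRec

variable {m : ℕ}

/-- The rank of a (candidate boolean) interval. -/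
def rankCard {n : ℕ} (u z : Equiv.Perm (Fin n)) : ℕ :=
  (Finset.univ.filter (fun i : Fin n => invSeq z i = invSeq u i + 1)).card

/-- Boolean-interval pairs of rank `k`. -/
def BI (n : ℕ) (k : ℤ) : Type :=
  {pr : Equiv.Perm (Fin n) × Equiv.Perm (Fin n) //
    midLe pr.1 pr.2 ∧ (∀ i, invSeq pr.2 i ≤ invSeq pr.1 i + 1) ∧ ((rankCard pr.1 pr.2 : ℤ) = k)}

lemma b_eq (n : ℕ) (k : ℤ) : b n k = Nat.card (BI n k) := rfl

instance (n : ℕ) (k : ℤ) : Finite (BI n k) := by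
  unfold BI; infer_instance

/-- The inverse function of the permutation obtained by inserting the largest value `m` at
position `p` in the permutation `u` of `Fin m`. -/
def insFun (p : Fin (m + 1)) (u : Equiv.Perm (Fin m)) : Fin (m + 1) → Fin (m + 1) :=
  fun j => Fin.lastCases p (fun i => p.succAbove (u.symm i)) j

lemma insFun_last (p : Fin (m + 1)) (u : Equiv.Perm (Fin m)) :
    insFun p u (Fin.last m) = p := by simp [insFun]

lemma insFun_castSucc (p : Fin (m + 1)) (u : Equiv.Perm (Fin m)) (i : Fin m) :
    insFun p u i.castSucc = p.succAbove (u.symm i) := by simp [insFun]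

lemma insFun_inj (p : Fin (m + 1)) (u : Equiv.Perm (Fin m)) :
    Function.Injective (insFun p u) := by
  intro a c h
  rcases Fin.eq_castSucc_or_eq_last a with ⟨s, rfl⟩ | rfl <;>
    rcases Fin.eq_castSucc_or_eq_last c with ⟨t, rfl⟩ | rfl
  · rw [insFun_castSucc, insFun_castSucc] at h
    have := Fin.succAbove_right_injective h
    simp only [EmbeddingLike.apply_eq_iff_eq] at this
    rw [this]
  · rw [insFun_castSucc, insFun_last] at h
    exact absurd h (Fin.succAbove_ne _ _)
  · rw [insFun_castSucc, insFun_last] at h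
    exact absurd h.symm (Fin.succAbove_ne _ _)
  · rfl

/-- The permutation whose inverse is `insFun p u`. -/
noncomputable def insPerm (p : Fin (m + 1)) (u : Equiv.Perm (Fin m)) :
    Equiv.Perm (Fin (m + 1)) :=
  (Equiv.ofBijective _ ((Finite.injective_iff_bijective).mp (insFun_inj p u))).symm

lemma insPerm_symm_apply (p : Fin (m + 1)) (u : Equiv.Perm (Fin m)) (j : Fin (m + 1)) :
    (insPerm p u).symm j = insFun p u j := rfl

lemma insPerm_symm_last (p : Fin (m + 1)) (u : Equiv.Perm (Fin m)) :
    (insPerm p u).symm (Fin.last m) = p := insFun_last p u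

lemma insPerm_symm_castSucc (p : Fin (m + 1)) (u : Equiv.Perm (Fin m)) (i : Fin m) :
    (insPerm p u).symm i.castSucc = p.succAbove (u.symm i) := insFun_castSucc p u i

lemma invSeq_insPerm_castSucc (p : Fin (m + 1)) (u : Equiv.Perm (Fin m)) (i : Fin m) :
    invSeq (insPerm p u) i.castSucc = invSeq u i := by
  classical
  unfold invSeq
  have key : (Finset.univ.filter (fun j : Fin (m + 1) =>
        j < i.castSucc ∧ (insPerm p u).symm i.castSucc < (insPerm p u).symm j))
      = (Finset.univ.filter (fun t : Fin m => t < i ∧ u.symm i < u.symm t)).map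
          ⟨Fin.castSucc, Fin.castSucc_injective m⟩ := by
    ext j
    simp only [Finset.mem_filter, Finset.mem_univ, true_and, Finset.mem_map,
      Function.Embedding.coeFn_mk]
    constructor
    · rintro ⟨hlt, hgt⟩
      have hne : j ≠ Fin.last m := by
        intro h
        subst h
        exact absurd hlt (by simp [Fin.lt_iff_val_lt_val])
      obtain ⟨t, rfl⟩ := Fin.exists_castSucc_eq.mpr hne
      refine ⟨t, ⟨?_, ?_⟩, rfl⟩
      · exact (Fin.castSucc_lt_castSucc_iff).mp hlt
      · rw [insPerm_symm_castSucc, insPerm_symm_castSucc] at hgt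
        exact (Fin.succAbove_lt_succAbove_iff).mp hgt
    · rintro ⟨t, ⟨h1, h2⟩, rfl⟩
      refine ⟨(Fin.castSucc_lt_castSucc_iff).mpr h1, ?_⟩
      rw [insPerm_symm_castSucc, insPerm_symm_castSucc]
      exact (Fin.succAbove_lt_succAbove_iff).mpr h2
  rw [key, Finset.card_map]

lemma card_filter_le_val (a : ℕ) :
    (Finset.univ.filter (fun t : Fin m => a ≤ (t : ℕ))).card = m - a := by
  classical
  by_cases h : a < m
  · have : (Finset.univ.filter (fun t : Fin m => a ≤ (t : ℕ))) = Finset.Ici (⟨a, h⟩ : Fin m) := by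
      ext t
      simp [Fin.le_def]
    rw [this, Fin.card_Ici]
  · have : (Finset.univ.filter (fun t : Fin m => a ≤ (t : ℕ))) = ∅ := by
      ext t
      simp only [Finset.mem_filter, Finset.mem_univ, true_and, Finset.notMem_empty, iff_false]
      omega
    rw [this]
    simp
    omega

lemma invSeq_insPerm_last (p : Fin (m + 1)) (u : Equiv.Perm (Fin m)) :
    invSeq (insPerm p u) (Fin.last m) = m - (p : ℕ) := by
  classical
  unfold invSeq
  have key : (Finset.univ.filter (fun j : Fin (m + 1) =>
        j < Fin.last m ∧ (insPerm p u).symm (Fin.last m) < (insPerm p u).symm j))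
      = (Finset.univ.filter (fun t : Fin m => (p : ℕ) ≤ ((u.symm t : Fin m) : ℕ))).map
          ⟨Fin.castSucc, Fin.castSucc_injective m⟩ := by
    ext j
    simp only [Finset.mem_filter, Finset.mem_univ, true_and, Finset.mem_map,
      Function.Embedding.coeFn_mk]
    constructor
    · rintro ⟨hlt, hgt⟩
      obtain ⟨t, rfl⟩ := Fin.exists_castSucc_eq.mpr (Fin.lt_last_iff_ne_last.mp hlt)
      refine ⟨t, ?_, rfl⟩
      rw [insPerm_symm_last, insPerm_symm_castSucc] at hgt
      have := (Fin.lt_succAbove_iff_le_castSucc p (u.symm t)).mp hgt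
      simpa [Fin.le_def] using this
    · rintro ⟨t, ht, rfl⟩
      refine ⟨Fin.castSucc_lt_last t, ?_⟩
      rw [insPerm_symm_last, insPerm_symm_castSucc]
      exact (Fin.lt_succAbove_iff_le_castSucc p (u.symm t)).mpr (by simpa [Fin.le_def] using ht)
  rw [key, Finset.card_map]
  have hperm : (Finset.univ.filter (fun t : Fin m => (p : ℕ) ≤ ((u.symm t : Fin m) : ℕ)))
      = (Finset.univ.filter (fun t : Fin m => (p : ℕ) ≤ (t : ℕ))).map u.toEmbedding := by
    ext t
    simp [Finset.mem_map_equiv]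
  rw [hperm, Finset.card_map, card_filter_le_val]

/-- The insertion equivalence. -/
noncomputable def insEquiv (m : ℕ) :
    (Fin (m + 1) × Equiv.Perm (Fin m)) ≃ Equiv.Perm (Fin (m + 1)) := by
  classical
  refine Equiv.ofBijective (fun x => insPerm x.1 x.2)
    ((Fintype.bijective_iff_injective_and_card _).mpr ⟨?_, ?_⟩)
  · rintro ⟨p, u⟩ ⟨q, z⟩ h
    simp only at h
    have hp : p = q := by
      have := congrArg (fun v => Equiv.symm v (Fin.last m)) h
      simpa [insPerm_symm_last] using this
    subst hp
    have hu : u.symm = z.symm := by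
      apply Equiv.ext
      intro t
      have := congrArg (fun v => Equiv.symm v t.castSucc) h
      simp only [insPerm_symm_castSucc] at this
      exact Fin.succAbove_right_injective this
    have : u = z := by
      rw [← u.symm_symm, hu, z.symm_symm]
    exact Prod.ext rfl this
  · simp [Fintype.card_perm, Nat.factorial_succ]

lemma insEquiv_apply (p : Fin (m + 1)) (u : Equiv.Perm (Fin m)) :
    insEquiv m (p, u) = insPerm p u := rfl

lemma forall_lastCases {P : Fin (m + 1) → Prop} :
    (∀ j, P j) ↔ (∀ i : Fin m, P i.castSucc) ∧ P (Fin.last m) :=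
  ⟨fun H => ⟨fun _ => H _, H _⟩, fun H j => Fin.lastCases H.2 H.1 j⟩

lemma midLe_ins_iff (p q : Fin (m + 1)) (u z : Equiv.Perm (Fin m)) :
    midLe (insPerm p u) (insPerm q z) ↔ midLe u z ∧ (q : ℕ) ≤ (p : ℕ) := by
  unfold midLe
  rw [forall_lastCases]
  simp only [invSeq_insPerm_castSucc, invSeq_insPerm_last]
  have hp := p.isLt
  have hq := q.isLt
  constructor
  · rintro ⟨h1, h2⟩; exact ⟨h1, by omega⟩
  · rintro ⟨h1, h2⟩; exact ⟨h1, by omega⟩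

lemma cond2_ins_iff (p q : Fin (m + 1)) (u z : Equiv.Perm (Fin m)) :
    (∀ i, invSeq (insPerm q z) i ≤ invSeq (insPerm p u) i + 1) ↔
      (∀ i, invSeq z i ≤ invSeq u i + 1) ∧ (p : ℕ) ≤ (q : ℕ) + 1 := by
  rw [forall_lastCases]
  simp only [invSeq_insPerm_castSucc, invSeq_insPerm_last]
  have hp := p.isLt
  have hq := q.isLt
  constructor
  · rintro ⟨h1, h2⟩; exact ⟨h1, by omega⟩
  · rintro ⟨h1, h2⟩; exact ⟨h1, by omega⟩

lemma rank_ins (p q : Fin (m + 1)) (u z : Equiv.Perm (Fin m)) :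
    rankCard (insPerm p u) (insPerm q z)
      = rankCard u z + (if (p : ℕ) = (q : ℕ) + 1 then 1 else 0) := by
  classical
  have hp := p.isLt
  have hq := q.isLt
  unfold rankCard
  rw [Finset.card_filter, Fin.sum_univ_castSucc]
  simp only [invSeq_insPerm_castSucc, invSeq_insPerm_last]
  rw [← Finset.card_filter]
  congr 1
  split_ifs with h1 h2 h2 <;> first | rfl | omega

/-- The condition defining `BI (m+1) k`, transported along `insEquiv`. -/
lemma cond_iff (p q : Fin (m + 1)) (u z : Equiv.Perm (Fin m)) (k : ℤ) :
    (midLe (insPerm p u) (insPerm q z) ∧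
        (∀ i, invSeq (insPerm q z) i ≤ invSeq (insPerm p u) i + 1) ∧
        ((rankCard (insPerm p u) (insPerm q z) : ℤ) = k)) ↔
      ((q : ℕ) ≤ (p : ℕ) ∧ (p : ℕ) ≤ (q : ℕ) + 1 ∧
        (midLe u z ∧ (∀ i, invSeq z i ≤ invSeq u i + 1) ∧
          (rankCard u z : ℤ) + (if (p : ℕ) = (q : ℕ) + 1 then 1 else 0) = k)) := by
  rw [midLe_ins_iff, cond2_ins_iff, rank_ins]
  constructor
  · rintro ⟨⟨h1, h2⟩, ⟨h3, h4⟩, h5⟩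
    refine ⟨h2, h4, h1, h3, ?_⟩
    rw [← h5]
    push_cast
    split_ifs <;> simp
  · rintro ⟨h2, h4, h1, h3, h5⟩
    refine ⟨⟨h1, h2⟩, ⟨h3, h4⟩, ?_⟩
    rw [← h5]
    push_cast
    split_ifs <;> simp

/-- The explicit condition on quadruples. -/
def R (m : ℕ) (k : ℤ) (x : (Fin (m + 1) × Equiv.Perm (Fin m)) × (Fin (m + 1) × Equiv.Perm (Fin m))) :
    Prop :=
  (x.2.1 : ℕ) ≤ (x.1.1 : ℕ) ∧ (x.1.1 : ℕ) ≤ (x.2.1 : ℕ) + 1 ∧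
    (midLe x.1.2 x.2.2 ∧ (∀ i, invSeq x.2.2 i ≤ invSeq x.1.2 i + 1) ∧
      (rankCard x.1.2 x.2.2 : ℤ) + (if (x.1.1 : ℕ) = (x.2.1 : ℕ) + 1 then 1 else 0) = k)

noncomputable def step1 (m : ℕ) (k : ℤ) :
    {x : (Fin (m + 1) × Equiv.Perm (Fin m)) × (Fin (m + 1) × Equiv.Perm (Fin m)) // R m k x}
      ≃ BI (m + 1) k := by
  refine Equiv.subtypeEquiv ((insEquiv m).prodCongr (insEquiv m)) ?_
  rintro ⟨⟨p, u⟩, ⟨q, z⟩⟩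
  exact (cond_iff p q u z k).symm

/-- Splitting into the two cases `p = q` and `p = q + 1`. -/
noncomputable def step2 (m : ℕ) (k : ℤ) :
    {x : (Fin (m + 1) × Equiv.Perm (Fin m)) × (Fin (m + 1) × Equiv.Perm (Fin m)) // R m k x}
      ≃ (Fin (m + 1) × BI m k) ⊕ (Fin m × BI m (k - 1)) := by
  classical
  refine
    { toFun := fun x =>
        match x with
        | ⟨((p, u), (q, z)), hx⟩ =>
          if h : (p : ℕ) = (q : ℕ) + 1 then
            Sum.inr (⟨(q : ℕ), by have := p.isLt; omega⟩,
              ⟨(u, z), hx.2.2.1, hx.2.2.2.1, by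
                have hr := hx.2.2.2.2
                dsimp only at hr ⊢
                rw [if_pos h] at hr
                omega⟩)
          else
            Sum.inl (p,
              ⟨(u, z), hx.2.2.1, hx.2.2.2.1, by
                have hr := hx.2.2.2.2
                dsimp only at hr ⊢
                rw [if_neg h] at hr
                omega⟩)
      invFun := fun y =>
        match y with
        | Sum.inl (a, ⟨(u, z), h⟩) =>
          ⟨((a, u), (a, z)), by
            refine ⟨le_refl _, Nat.le_succ _, h.1, h.2.1, ?_⟩
            have := h.2.2
            dsimp only at this ⊢
            rw [if_neg (by omega)]
            omega⟩
        | Sum.inr (t, ⟨(u, z), h⟩) =>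
          ⟨((t.succ, u), (t.castSucc, z)), by
            refine ⟨by simp, by simp, h.1, h.2.1, ?_⟩
            have := h.2.2
            dsimp only at this ⊢
            rw [if_pos (by simp)]
            omega⟩
      left_inv := ?_
      right_inv := ?_ }
  · rintro ⟨⟨⟨p, u⟩, ⟨q, z⟩⟩, hx⟩
    dsimp only
    by_cases h : (p : ℕ) = (q : ℕ) + 1
    · rw [dif_pos h]
      apply Subtype.ext
      have h1 : Fin.succ (⟨(q : ℕ), by have := p.isLt; omega⟩ : Fin m) = p := by
        apply Fin.ext
        simp [h.symm]
      have h2 : Fin.castSucc (⟨(q : ℕ), by have := p.isLt; omega⟩ : Fin m) = q := by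
        apply Fin.ext
        simp
      simp [h1, h2]
    · rw [dif_neg h]
      apply Subtype.ext
      have hq : q = p := by
        apply Fin.ext
        have h1 : (q : ℕ) ≤ (p : ℕ) := hx.1
        have h2 : (p : ℕ) ≤ (q : ℕ) + 1 := hx.2.1
        omega
      simp [hq]
  · rintro (⟨a, ⟨⟨u, z⟩, h⟩⟩ | ⟨t, ⟨⟨u, z⟩, h⟩⟩)
    · dsimp only
      rw [dif_neg (by omega)]
    · dsimp only
      rw [dif_pos (by simp)]
      exact congrArg Sum.inr (Prod.ext (Fin.ext (by simp)) rfl)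

noncomputable def mainEquiv (m : ℕ) (k : ℤ) :
    BI (m + 1) k ≃ (Fin (m + 1) × BI m k) ⊕ (Fin m × BI m (k - 1)) :=
  (step1 m k).symm.trans (step2 m k)

end BooleanRec

/-- Recursion for the number of rank-`k` boolean intervals of the middle order:
`b(n,k) = n·b(n-1,k) + (n-1)·b(n-1,k-1)`. -/
theorem boolean_intervals_by_rank_recursion (n : ℕ) (hn : 1 ≤ n) (k : ℤ) :
    b n k = n * b (n - 1) k + (n - 1) * b (n - 1) (k - 1) := by
  obtain ⟨m, rfl⟩ : ∃ m, n = m + 1 := ⟨n - 1, by omega⟩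
  simp only [Nat.add_sub_cancel]
  rw [BooleanRec.b_eq, BooleanRec.b_eq, BooleanRec.b_eq,
    Nat.card_congr (BooleanRec.mainEquiv m k), Nat.card_sum, Nat.card_prod, Nat.card_prod,
    Nat.card_eq_fintype_card (α := Fin (m + 1)), Nat.card_eq_fintype_card (α := Fin m),
    Fintype.card_fin, Fintype.card_fin]
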